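/- Let Ω be a circle with diameter [N,S] in the plane, L the tangent line to Ω at S, and let a, b ∈ Ω. Let B be the bisector of the angle at N formed by lines L(N,a) and L(N,b), and let r(a), r(b) be the reflections of a, b across B. Then the line through r(a) and r(b) is parallel to L (equivalently, perpendicular to L(N,S) reflected appropriately); in particular the stereographic projection from N of the chord endpoints lies on a line obtained from [r(a),r(b)] by a homothety centered at N. -/
import Mathlib


open Set Metric EuclideanGeometry Filter RealInnerProductSpace Real

noncomputable section

abbrev E2 : Type := EuclideanSpace ℝ (Fin 2)
abbrev E3 : Type := EuclideanSpace ℝ (Fin 3)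

/-- A convex body: a compact convex set with nonempty interior. -/
def IsConvexBody {n : ℕ} (K : Set (EuclideanSpace ℝ (Fin n))) : Prop :=
  Convex ℝ K ∧ IsCompact K ∧ (interior K).Nonempty

/-- The line L(p,q) through two points. -/
def lineThru {n : ℕ} (p q : EuclideanSpace ℝ (Fin n)) : Set (EuclideanSpace ℝ (Fin n)) :=
  {x | ∃ t : ℝ, x = p + t • (q - p)}

/-- The line through p with direction v. -/
def lineDir {n : ℕ} (p v : EuclideanSpace ℝ (Fin n)) : Set (EuclideanSpace ℝ (Fin n)) :=
  {x | ∃ t : ℝ, x = p + t • v}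

/-- The ray from N through a. -/
def rayFrom {n : ℕ} (N a : EuclideanSpace ℝ (Fin n)) : Set (EuclideanSpace ℝ (Fin n)) :=
  {x | ∃ t : ℝ, 0 ≤ t ∧ x = N + t • (a - N)}

/-- The hyperplane through p with normal u (a line in ℝ², a plane in ℝ³). -/
def planeNormal {n : ℕ} (p u : EuclideanSpace ℝ (Fin n)) : Set (EuclideanSpace ℝ (Fin n)) :=
  {x | ⟪x - p, u⟫ = 0}

/-- Reflection across the line through p with direction v.  In ℝ³ this map is exactly the
rotation by angle π about that line. -/
def reflAxis {n : ℕ} (p v x : EuclideanSpace ℝ (Fin n)) : EuclideanSpace ℝ (Fin n) :=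
  p + ((2 * ⟪x - p, v⟫ / ⟪v, v⟫) • v - (x - p))

/-- Reflection across the hyperplane through p with normal m. -/
def reflPlane {n : ℕ} (p m x : EuclideanSpace ℝ (Fin n)) : EuclideanSpace ℝ (Fin n) :=
  x - ((2 * ⟪x - p, m⟫ / ⟪m, m⟫) • m)

/-- The cone S_x(W) generated by W with apex x. -/
def coneHull {n : ℕ} (x : EuclideanSpace ℝ (Fin n)) (W : Set (EuclideanSpace ℝ (Fin n))) :
    Set (EuclideanSpace ℝ (Fin n)) :=
  {z | ∃ y ∈ W, ∃ l : ℝ, 0 ≤ l ∧ z = x + l • (y - x)}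

/-- C_x(W), the boundary of the cone S_x(W). -/
def coneBd {n : ℕ} (x : EuclideanSpace ℝ (Fin n)) (W : Set (EuclideanSpace ℝ (Fin n))) :
    Set (EuclideanSpace ℝ (Fin n)) := frontier (coneHull x W)

/-- P is a support hyperplane of K at S. -/
def IsSupportPlaneAt {n : ℕ} (K : Set (EuclideanSpace ℝ (Fin n))) (S : EuclideanSpace ℝ (Fin n))
    (P : Set (EuclideanSpace ℝ (Fin n))) : Prop :=
  ∃ u, u ≠ 0 ∧ P = planeNormal S u ∧ ∀ y ∈ K, ⟪y - S, u⟫ ≤ 0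

/-- The stereographic property of a planar convex body K with respect to the point N and the
support line with normal u: for every chord [a,b], reflecting a, b across the bisector B of the
angle at N between L(N,a) and L(N,b) (i.e. the line through N whose reflection maps the ray
from N through a onto the ray from N through b) yields a segment parallel to the support line
(i.e. perpendicular to its normal u). -/
def StereoProp (K : Set E2) (N u : E2) : Prop :=
  ∀ a ∈ frontier K, ∀ b ∈ frontier K, a ≠ N → b ≠ N →
    ∀ w : E2, w ≠ 0 → reflAxis N w '' rayFrom N a = rayFrom N b →
      ⟪reflAxis N w a - reflAxis N w b, u⟫ = 0

/-- f is a rotation about the line L: an orientation preserving isometry of ℝ³ fixing L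
pointwise. -/
def IsRotationAbout (f : E3 → E3) (L : Set E3) : Prop :=
  ∃ (A : E3 ≃ₗᵢ[ℝ] E3) (b : E3), (∀ x, f x = A x + b) ∧
    LinearMap.det (A.toLinearEquiv : E3 →ₗ[ℝ] E3) = 1 ∧ ∀ x ∈ L, f x = x

/-- The hypotheses of the stereographic characterization theorem (Theorem 5 of the paper):
K is a convex body, N ≠ S are boundary points, Π_S = planeNormal S u is the unique support
plane at S, Ψ is the stereographic projection from N onto Π_S, and every section K_Γ = Γ ∩ K
(Γ meeting int K, N ∉ Γ, Γ not parallel to Π_S) gives a cone C_N(K_Γ) invariant under a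
rotation R^Γ by π about some line L_Γ, with Ψ(K_Γ) = R^Γ(K'_Γ) for a homothetic copy K'_Γ of
K_Γ centered at N. -/
def StereoHyp (K : Set E3) (N S u : E3) (Ψ : E3 → E3) : Prop :=
  IsConvexBody K ∧ N ∈ frontier K ∧ S ∈ frontier K ∧ N ≠ S ∧ u ≠ 0 ∧
  IsSupportPlaneAt K S (planeNormal S u) ∧
  (∀ P, IsSupportPlaneAt K S P → P = planeNormal S u) ∧
  (∀ x ∈ K, x ≠ N → Ψ x ∈ lineThru N x ∧ Ψ x ∈ planeNormal S u) ∧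
  (∀ p w : E3, w ≠ 0 → (planeNormal p w ∩ interior K).Nonempty → N ∉ planeNormal p w →
    ¬ (∃ s : ℝ, w = s • u) →
    ∃ q v : E3, v ≠ 0 ∧
      reflAxis q v '' coneBd N (planeNormal p w ∩ K) = coneBd N (planeNormal p w ∩ K) ∧
      ∃ lam : ℝ, 0 < lam ∧
        Ψ '' (planeNormal p w ∩ K) =
          reflAxis q v '' ((fun x => N + lam • (x - N)) '' (planeNormal p w ∩ K)))

/-- The circumscribed disc of K: the closed disc of minimal radius containing K. -/
def IsCircumDisc (K : Set E2) (c : E2) (r : ℝ) : Prop :=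
  K ⊆ closedBall c r ∧ ∀ c' : E2, ∀ r' : ℝ, K ⊆ closedBall c' r' → r ≤ r'

/-- An ellipse in ℝ³: the image of the unit circle under an injective affine map. -/
def IsEllipse3 (s : Set E3) : Prop :=
  ∃ T : E2 →ᵃ[ℝ] E3, Function.Injective T ∧ s = T '' (sphere (0 : E2) 1)

section Aux

lemma reflAxis_sub {n : ℕ} (N w x : EuclideanSpace ℝ (Fin n)) :
    reflAxis N w x - N = (2 * ⟪x - N, w⟫ / ⟪w, w⟫) • w - (x - N) := by
  simp [reflAxis]

lemma reflAxis_invol {n : ℕ} (N w x : EuclideanSpace ℝ (Fin n)) (hw : w ≠ 0) :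
    reflAxis N w (reflAxis N w x) = x := by
  have hww : ⟪w, w⟫ ≠ (0 : ℝ) := inner_self_ne_zero.2 hw
  have h1 := reflAxis_sub N w x
  have h2 := reflAxis_sub N w (reflAxis N w x)
  set c : ℝ := 2 * ⟪x - N, w⟫ / ⟪w, w⟫ with hc
  have hcW : c * ⟪w, w⟫ = 2 * ⟪x - N, w⟫ := by
    rw [hc]; exact div_mul_cancel₀ _ hww
  have hin : ⟪reflAxis N w x - N, w⟫ = c * ⟪w, w⟫ - ⟪x - N, w⟫ := by
    rw [h1, inner_sub_left, real_inner_smul_left]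
  have hco : 2 * ⟪reflAxis N w x - N, w⟫ / ⟪w, w⟫ = c := by
    rw [hin, hcW, hc]; ring
  have h3 : reflAxis N w (reflAxis N w x) - N = x - N := by
    rw [h2, hco, h1]; module
  have := congrArg (· + N) h3
  simpa using this

lemma reflAxis_norm {n : ℕ} (N w x : EuclideanSpace ℝ (Fin n)) (hw : w ≠ 0) :
    ‖reflAxis N w x - N‖ = ‖x - N‖ := by
  have hww : ⟪w, w⟫ ≠ (0 : ℝ) := inner_self_ne_zero.2 hw
  set c : ℝ := 2 * ⟪x - N, w⟫ / ⟪w, w⟫ with hc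
  have hcW : c * ⟪w, w⟫ = 2 * ⟪x - N, w⟫ := by
    rw [hc]; exact div_mul_cancel₀ _ hww
  have key : ‖reflAxis N w x - N‖ ^ 2 = ‖x - N‖ ^ 2 := by
    rw [reflAxis_sub, ← real_inner_self_eq_norm_sq, ← real_inner_self_eq_norm_sq, ← hc]
    simp only [inner_sub_sub_self, real_inner_smul_left, real_inner_smul_right,
      real_inner_comm w (x - N)]
    rw [real_inner_comm (x - N) w]
    linear_combination c * hcW
  have h1 : (0:ℝ) ≤ ‖reflAxis N w x - N‖ := norm_nonneg _
  have h2 : (0:ℝ) ≤ ‖x - N‖ := norm_nonneg _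
  nlinarith [key]

lemma thales {n : ℕ} (N S x : EuclideanSpace ℝ (Fin n))
    (hx : x ∈ sphere (midpoint ℝ N S) (dist N S / 2)) :
    ⟪x - N, S - N⟫ = ‖x - N‖ ^ 2 := by
  have h1 : dist x (midpoint ℝ N S) = dist N S / 2 := hx
  have h2 : dist N (midpoint ℝ N S) = dist N S / 2 := by
    rw [dist_left_midpoint]
    norm_num
    ring
  have h3 : ‖x - midpoint ℝ N S‖ = ‖N - midpoint ℝ N S‖ := by
    rw [← dist_eq_norm, ← dist_eq_norm, h1, h2]
  have hm : midpoint ℝ N S = (2:ℝ)⁻¹ • (N + S) := by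
    rw [midpoint_eq_smul_add, invOf_eq_inv]
  have h4 : ‖x - midpoint ℝ N S‖ ^ 2 = ‖N - midpoint ℝ N S‖ ^ 2 := by rw [h3]
  rw [← real_inner_self_eq_norm_sq, ← real_inner_self_eq_norm_sq] at h4
  have e1 : x - midpoint ℝ N S = (x - N) - (2:ℝ)⁻¹ • (S - N) := by
    rw [hm]; module
  have e2 : N - midpoint ℝ N S = -((2:ℝ)⁻¹ • (S - N)) := by
    rw [hm]; module
  rw [e1, e2, inner_sub_sub_self, inner_neg_neg, real_inner_smul_left,
    real_inner_smul_right, real_inner_comm (S - N) (x - N)] at h4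
  rw [← real_inner_self_eq_norm_sq, real_inner_comm]
  linarith [h4]

end Aux

/-- stereographic property of the circle: for points a, b on the circle with
diameter [N,S], reflecting a and b across the bisector at N of the lines L(N,a), L(N,b)
(the line through N whose reflection maps the ray from N through a onto the ray from N
through b) produces a segment parallel to the tangent line to the circle at S, i.e.
perpendicular to S - N. -/
theorem stmt15 (N S : E2) (hNS : N ≠ S) (a b : E2)
    (ha : a ∈ sphere (midpoint ℝ N S) (dist N S / 2))
    (hb : b ∈ sphere (midpoint ℝ N S) (dist N S / 2))
    (haN : a ≠ N) (hbN : b ≠ N)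
    (w : E2) (hw : w ≠ 0) (hbis : reflAxis N w '' rayFrom N a = rayFrom N b) :
    ⟪reflAxis N w a - reflAxis N w b, S - N⟫ = 0 := by
  have hra : reflAxis N w a ∈ rayFrom N b := by
    rw [← hbis]; exact ⟨a, ⟨1, zero_le_one, by simp⟩, rfl⟩
  have hbis' : reflAxis N w '' rayFrom N b = rayFrom N a := by
    rw [← hbis, ← Set.image_comp]
    have : (reflAxis N w ∘ reflAxis N w) = id := by
      funext x; exact reflAxis_invol N w x hw
    rw [this, Set.image_id]
  have hrb : reflAxis N w b ∈ rayFrom N a := by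
    rw [← hbis']; exact ⟨b, ⟨1, zero_le_one, by simp⟩, rfl⟩
  obtain ⟨s, hs0, hsa⟩ := hra
  obtain ⟨t, ht0, htb⟩ := hrb
  have hna := reflAxis_norm N w a hw
  have hnb := reflAxis_norm N w b hw
  have hsa' : reflAxis N w a - N = s • (b - N) := by rw [hsa]; abel
  have htb' : reflAxis N w b - N = t • (a - N) := by rw [htb]; abel
  have hs : s * ‖b - N‖ = ‖a - N‖ := by
    rw [← hna, hsa', norm_smul, Real.norm_eq_abs, abs_of_nonneg hs0]
  have ht : t * ‖a - N‖ = ‖b - N‖ := by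
    rw [← hnb, htb', norm_smul, Real.norm_eq_abs, abs_of_nonneg ht0]
  have key : reflAxis N w a - reflAxis N w b = s • (b - N) - t • (a - N) := by
    rw [← hsa', ← htb']; abel
  rw [key, inner_sub_left, real_inner_smul_left, real_inner_smul_left,
    thales N S a ha, thales N S b hb]
  nlinarith [hs, ht, norm_nonneg (a - N), norm_nonneg (b - N)]
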